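/- arXiv:2603.02782 — 3 statements merged into one kernel-verified Lean document; each statement's English description precedes it below -/
import Mathlib

section
/- Under the setting of the auxiliary-map lemma (pseudo-hyperbolic pair (g,T) with constants 1 ≤ λ < μ and Lip(g−T) ≤ ε < (μ−λ)/4 on all of ℝ^d), define F₁ = {φ : E_cs → E_u | φ(0)=0, Lip(φ) ≤ 1} with norm ‖φ‖ = sup_{y≠0} ‖φ(y)‖/‖y‖, and the graph transform Γφ(y) := the unique fixed point of h_y^φ. Then Γ maps F₁ into F₁ and is a contraction with Lip(Γ) ≤ (λ+ε)/(μ−2ε) < 1. -/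
/-- The graph transform `Γ` maps `F₁ = {φ : E_cs → E_u | φ 0 = 0, Lip(φ) ≤ 1}` into
itself and is a contraction with constant `(λ+ε)/(μ−2ε) < 1` for the norm
`‖φ‖ = sup_{y≠0} ‖φ y‖/‖y‖`, where `Γφ(y)` is the unique fixed point of the auxiliary
map `h_y^φ(z) = (T|_{E_u})⁻¹(φ(p_cs(g(y+z))) − p_u((g−T)(y+z)))`, for a globally
pseudo-hyperbolic pair `(g,T)` with constants `1 ≤ λ < μ`, `Lip(g−T) ≤ ε < (μ−λ)/4`. -/
theorem graph_transform_contraction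
    {Ecs Eu : Type*}
    [NormedAddCommGroup Ecs] [NormedSpace ℝ Ecs]
    [NormedAddCommGroup Eu] [NormedSpace ℝ Eu]
    (T : Ecs × Eu →L[ℝ] Ecs × Eu)
    (g : Ecs × Eu → Ecs × Eu)
    (μ lam ε : ℝ) (hlam : 1 ≤ lam) (hlamμ : lam < μ)
    (hε0 : 0 < ε) (hε : ε < (μ - lam) / 4)
    (hinv_cs : ∀ y : Ecs, (T (y, 0)).2 = 0)
    (hinv_u : ∀ z : Eu, (T (0, z)).1 = 0)
    (hTcs : ∀ y : Ecs, ‖T (y, 0)‖ ≤ lam * ‖y‖)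
    (hTu : ∀ z : Eu, μ * ‖z‖ ≤ ‖T (0, z)‖)
    (hg0 : g 0 = 0)
    (hgT : ∀ x x' : Ecs × Eu, ‖(g x - T x) - (g x' - T x')‖ ≤ ε * ‖x - x'‖)
    (S : Eu →L[ℝ] Eu)
    (hS₁ : ∀ z : Eu, S ((T (0, z)).2) = z)
    (hS₂ : ∀ z : Eu, (T (0, S z)).2 = z)
    -- membership in `F₁`:
    (F₁ : (Ecs → Eu) → Prop)
    (hF₁ : ∀ φ, F₁ φ ↔ (φ 0 = 0 ∧ ∀ y y' : Ecs, ‖φ y - φ y'‖ ≤ ‖y - y'‖))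
    -- the graph transform: `Γφ(y)` is a fixed point of the auxiliary map `h_y^φ`:
    (Γ : (Ecs → Eu) → Ecs → Eu)
    (hΓ : ∀ φ, F₁ φ → ∀ y : Ecs,
      S (φ ((g (y, Γ φ y)).1) - ((g (y, Γ φ y)).2 - (T (y, Γ φ y)).2)) = Γ φ y) :
    -- `Γ` maps `F₁` into `F₁`:
    (∀ φ, F₁ φ → F₁ (Γ φ)) ∧
    -- and is a contraction with constant `(λ+ε)/(μ−2ε) < 1` in the norm
    -- `‖φ‖ = sup_{y≠0} ‖φ y‖/‖y‖`:
    ((lam + ε) / (μ - 2 * ε) < 1) ∧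
    (∀ φ₁ φ₂, F₁ φ₁ → F₁ φ₂ → ∀ C : ℝ, 0 ≤ C →
      (∀ y, ‖φ₁ y - φ₂ y‖ ≤ C * ‖y‖) →
      ∀ y, ‖Γ φ₁ y - Γ φ₂ y‖ ≤ ((lam + ε) / (μ - 2 * ε)) * C * ‖y‖) := by
  have hμ2ε : 0 < μ - 2 * ε := by nlinarith
  have hT0 : T 0 = 0 := map_zero T
  have hTsplit : ∀ (y : Ecs) (z : Eu), T (y, z) = T (y, 0) + T (0, z) := by
    intro y z
    rw [← map_add]
    congr 1
    simp
  have hT1 : ∀ (y : Ecs) (z : Eu), (T (y, z)).1 = (T (y, 0)).1 := by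
    intro y z; rw [hTsplit]; simp [hinv_u z]
  have hSnorm : ∀ w : Eu, μ * ‖S w‖ ≤ ‖w‖ := by
    intro w
    refine (hTu (S w)).trans ?_
    rw [Prod.norm_def, hinv_u (S w), hS₂ w, norm_zero]
    exact le_of_eq (max_eq_right (norm_nonneg w))
  have hg2 : ∀ x x' : Ecs × Eu,
      ‖(g x - T x).2 - (g x' - T x').2‖ ≤ ε * ‖x - x'‖ := by
    intro x x'
    have : (g x - T x).2 - (g x' - T x').2 = ((g x - T x) - (g x' - T x')).2 := rfl
    rw [this]
    exact (norm_snd_le _).trans (hgT x x')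
  have hg1 : ∀ x x' : Ecs × Eu,
      ‖(g x).1 - (g x').1‖ ≤ ε * ‖x - x'‖ + lam * ‖x.1 - x'.1‖ := by
    intro x x'
    have h2 : (T x).1 - (T x').1 = (T (x.1 - x'.1, 0)).1 := by
      rw [← Prod.fst_sub, ← map_sub]
      have hx : x - x' = (x.1 - x'.1, x.2 - x'.2) := rfl
      rw [hx, hT1]
    have key : (g x).1 - (g x').1 =
        ((g x - T x) - (g x' - T x')).1 + (T (x.1 - x'.1, 0)).1 := by
      rw [← h2]
      have : ((g x - T x) - (g x' - T x')).1 =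
          (g x).1 - (T x).1 - ((g x').1 - (T x').1) := rfl
      rw [this]; abel
    rw [key]
    refine (norm_add_le _ _).trans (add_le_add ?_ ?_)
    · exact (norm_fst_le _).trans (hgT x x')
    · exact (norm_fst_le _).trans (hTcs _)
  have hprodle : ∀ (a : Ecs) (b : Eu), ‖((a, b) : Ecs × Eu)‖ ≤ ‖a‖ + ‖b‖ := by
    intro a b
    rw [Prod.norm_def]
    exact max_le (le_add_of_nonneg_right (norm_nonneg b)) (le_add_of_nonneg_left (norm_nonneg a))
  -- core estimate
  have core : ∀ (φ₁ φ₂ : Ecs → Eu) (y y' : Ecs) (z z' : Eu),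
      S (φ₁ ((g (y, z)).1) - ((g (y, z)).2 - (T (y, z)).2)) = z →
      S (φ₂ ((g (y', z')).1) - ((g (y', z')).2 - (T (y', z')).2)) = z' →
      μ * ‖z - z'‖ ≤
        ‖φ₁ ((g (y, z)).1) - φ₂ ((g (y', z')).1)‖
        + ε * ‖((y, z) : Ecs × Eu) - (y', z')‖ := by
    intro φ₁ φ₂ y y' z z' hz hz'
    set x : Ecs × Eu := (y, z) with hxdef
    set x' : Ecs × Eu := (y', z') with hxdef'
    have hzz : z - z' = S ((φ₁ ((g x).1) - φ₂ ((g x').1)) -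
        ((g x - T x).2 - (g x' - T x').2)) := by
      rw [← hz, ← hz', ← map_sub]
      congr 1
      have e1 : (g x - T x).2 = (g x).2 - (T x).2 := rfl
      have e2 : (g x' - T x').2 = (g x').2 - (T x').2 := rfl
      rw [e1, e2]; abel
    rw [hzz]
    refine (hSnorm _).trans ?_
    exact (norm_sub_le _ _).trans (add_le_add le_rfl (hg2 x x'))
  -- norm of (0, b)
  have hnormz : ∀ b : Eu, ‖((0, b) : Ecs × Eu)‖ = ‖b‖ := by
    intro b
    rw [Prod.norm_def]
    simp
  -- part 1: membership
  have mem : ∀ φ, F₁ φ → F₁ (Γ φ) := by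
    intro φ hφ
    obtain ⟨hφ0, hφL⟩ := (hF₁ φ).mp hφ
    have hfix := hΓ φ hφ
    -- Lipschitz
    have lip : ∀ y y' : Ecs, ‖Γ φ y - Γ φ y'‖ ≤ ‖y - y'‖ := by
      intro y y'
      have h := core φ φ y y' (Γ φ y) (Γ φ y') (hfix y) (hfix y')
      have h1 : ‖φ ((g (y, Γ φ y)).1) - φ ((g (y', Γ φ y')).1)‖ ≤
          ε * ‖((y, Γ φ y) : Ecs × Eu) - (y', Γ φ y')‖ + lam * ‖y - y'‖ := by
        refine (hφL _ _).trans ?_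
        exact hg1 (y, Γ φ y) (y', Γ φ y')
      have h2 : ‖((y, Γ φ y) : Ecs × Eu) - (y', Γ φ y')‖ ≤ ‖y - y'‖ + ‖Γ φ y - Γ φ y'‖ := by
        have : ((y, Γ φ y) : Ecs × Eu) - (y', Γ φ y') = (y - y', Γ φ y - Γ φ y') := rfl
        rw [this]
        exact hprodle _ _
      nlinarith [norm_nonneg (Γ φ y - Γ φ y'), norm_nonneg (y - y'),
        norm_nonneg (((y, Γ φ y) : Ecs × Eu) - (y', Γ φ y'))]
    -- zero
    have hzero : Γ φ 0 = 0 := by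
      have hz' : S (φ ((g ((0 : Ecs), (0 : Eu))).1) -
          ((g ((0 : Ecs), (0 : Eu))).2 - (T ((0 : Ecs), (0 : Eu))).2)) = 0 := by
        rw [Prod.mk_zero_zero, hg0, hT0]
        simp [hφ0]
      have h := core φ φ 0 0 (Γ φ 0) 0 (hfix 0) hz'
      have h1 : ‖φ ((g ((0 : Ecs), Γ φ 0)).1) - φ ((g ((0 : Ecs), (0 : Eu))).1)‖ ≤
          ε * ‖(((0 : Ecs), Γ φ 0) : Ecs × Eu) - ((0 : Ecs), (0 : Eu))‖ := by
        refine (hφL _ _).trans ?_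
        have := hg1 ((0 : Ecs), Γ φ 0) ((0 : Ecs), (0 : Eu))
        simpa using this
      have h2 : ‖(((0 : Ecs), Γ φ 0) : Ecs × Eu) - ((0 : Ecs), (0 : Eu))‖ = ‖Γ φ 0‖ := by
        have : (((0 : Ecs), Γ φ 0) : Ecs × Eu) - ((0 : Ecs), (0 : Eu)) = (0, Γ φ 0) := by
          simp
        rw [this, hnormz]
      rw [h2] at h1 h
      rw [sub_zero] at h
      have : ‖Γ φ 0‖ ≤ 0 := by nlinarith [norm_nonneg (Γ φ 0)]
      simpa using norm_le_zero_iff.mp (le_antisymm this (norm_nonneg _) ▸ this)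
    exact (hF₁ (Γ φ)).mpr ⟨hzero, lip⟩
  refine ⟨mem, by rw [div_lt_one hμ2ε]; linarith, ?_⟩
  -- contraction
  intro φ₁ φ₂ hφ₁ hφ₂ C hC hCbound y
  obtain ⟨hφ₁0, hφ₁L⟩ := (hF₁ φ₁).mp hφ₁
  obtain ⟨hφ₂0, hφ₂L⟩ := (hF₁ φ₂).mp hφ₂
  obtain ⟨hΓ₁0, hΓ₁L⟩ := (hF₁ (Γ φ₁)).mp (mem φ₁ hφ₁)
  have h := core φ₁ φ₂ y y (Γ φ₁ y) (Γ φ₂ y) (hΓ φ₁ hφ₁ y) (hΓ φ₂ hφ₂ y)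
  set z₁ := Γ φ₁ y
  set z₂ := Γ φ₂ y
  have hxx : ‖((y, z₁) : Ecs × Eu) - (y, z₂)‖ = ‖z₁ - z₂‖ := by
    have : ((y, z₁) : Ecs × Eu) - (y, z₂) = (0, z₁ - z₂) := by simp
    rw [this, hnormz]
  -- bound ‖z₁‖ ≤ ‖y‖
  have hz₁ : ‖z₁‖ ≤ ‖y‖ := by
    have := hΓ₁L y 0
    simpa [hΓ₁0] using this
  -- bound on first argument
  have ha : ‖(g (y, z₁)).1‖ ≤ (lam + ε) * ‖y‖ := by
    have h0 : (g ((0 : Ecs), (0 : Eu))).1 = 0 := by rw [Prod.mk_zero_zero, hg0]; rfl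
    have := hg1 (y, z₁) ((0 : Ecs), (0 : Eu))
    rw [h0, sub_zero] at this
    have hx0 : ((y, z₁) : Ecs × Eu) - ((0 : Ecs), (0 : Eu)) = (y, z₁) := by simp
    rw [hx0] at this
    have hxn : ‖((y, z₁) : Ecs × Eu)‖ ≤ ‖y‖ := by
      rw [Prod.norm_def]
      exact max_le le_rfl hz₁
    have : ‖(g (y, z₁)).1‖ ≤ ε * ‖y‖ + lam * ‖y - 0‖ := by
      refine this.trans (add_le_add ?_ le_rfl)
      exact mul_le_mul_of_nonneg_left hxn (le_of_lt hε0)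
    rw [sub_zero] at this
    nlinarith [norm_nonneg y]
  have hnum : ‖φ₁ ((g (y, z₁)).1) - φ₂ ((g (y, z₂)).1)‖ ≤
      C * ((lam + ε) * ‖y‖) + ε * ‖z₁ - z₂‖ := by
    calc ‖φ₁ ((g (y, z₁)).1) - φ₂ ((g (y, z₂)).1)‖
        ≤ ‖φ₁ ((g (y, z₁)).1) - φ₂ ((g (y, z₁)).1)‖
          + ‖φ₂ ((g (y, z₁)).1) - φ₂ ((g (y, z₂)).1)‖ := norm_sub_le_norm_sub_add_norm_sub _ _ _
      _ ≤ C * ‖(g (y, z₁)).1‖ + ‖(g (y, z₁)).1 - (g (y, z₂)).1‖ :=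
          add_le_add (hCbound _) (hφ₂L _ _)
      _ ≤ C * ((lam + ε) * ‖y‖) + ε * ‖z₁ - z₂‖ := by
          refine add_le_add (mul_le_mul_of_nonneg_left ha hC) ?_
          have := hg1 (y, z₁) (y, z₂)
          simp only [hxx] at this
          simpa using this
  rw [hxx] at h
  rw [div_mul_eq_mul_div, div_mul_eq_mul_div, le_div_iff₀ hμ2ε]
  nlinarith [norm_nonneg (z₁ - z₂), norm_nonneg y]
end

section
/- In the setting of the graph transform (globally pseudo-hyperbolic pair (g,T) with constants μ, λ, ε, splitting ℝ^d = E_cs ⊕ E_u with max-norm), define for φ ∈ F₁ the potential V_φ(x) = ‖p_u(x) − φ(p_cs(x))‖. Then for all φ ∈ F₁ and all x ∈ ℝ^d, V_φ(g(x)) ≥ (μ − 2ε)·V_{Γφ}(x), where μ − 2ε > 1. -/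
/-- Potential growth lemma: for a globally pseudo-hyperbolic pair `(g,T)` with constants
`1 ≤ λ < μ`, `Lip(g−T) ≤ ε < (μ−λ)/4` on `E_cs × E_u` (max-norm), the potential
`V_φ(x) = ‖p_u(x) − φ(p_cs(x))‖` satisfies `V_φ(g(x)) ≥ (μ−2ε)·V_{Γφ}(x)` for all
`φ ∈ F₁` and all `x`, where `μ − 2ε > 1` and `Γ` is the graph transform. -/
theorem potential_growth
    {Ecs Eu : Type*}
    [NormedAddCommGroup Ecs] [NormedSpace ℝ Ecs]
    [NormedAddCommGroup Eu] [NormedSpace ℝ Eu]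
    (T : Ecs × Eu →L[ℝ] Ecs × Eu)
    (g : Ecs × Eu → Ecs × Eu)
    (μ lam ε : ℝ) (hlam : 1 ≤ lam) (hlamμ : lam < μ)
    (hε0 : 0 < ε) (hε : ε < (μ - lam) / 4)
    (hinv_cs : ∀ y : Ecs, (T (y, 0)).2 = 0)
    (hinv_u : ∀ z : Eu, (T (0, z)).1 = 0)
    (hTcs : ∀ y : Ecs, ‖T (y, 0)‖ ≤ lam * ‖y‖)
    (hTu : ∀ z : Eu, μ * ‖z‖ ≤ ‖T (0, z)‖)
    (hg0 : g 0 = 0)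
    (hgT : ∀ x x' : Ecs × Eu, ‖(g x - T x) - (g x' - T x')‖ ≤ ε * ‖x - x'‖)
    (S : Eu →L[ℝ] Eu)
    (hS₁ : ∀ z : Eu, S ((T (0, z)).2) = z)
    (hS₂ : ∀ z : Eu, (T (0, S z)).2 = z)
    (F₁ : (Ecs → Eu) → Prop)
    (hF₁ : ∀ φ, F₁ φ ↔ (φ 0 = 0 ∧ ∀ y y' : Ecs, ‖φ y - φ y'‖ ≤ ‖y - y'‖))
    (Γ : (Ecs → Eu) → Ecs → Eu)
    (hΓmem : ∀ φ, F₁ φ → F₁ (Γ φ))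
    (hΓ : ∀ φ, F₁ φ → ∀ y : Ecs,
      S (φ ((g (y, Γ φ y)).1) - ((g (y, Γ φ y)).2 - (T (y, Γ φ y)).2)) = Γ φ y)
    -- the potential `V_φ(x) = ‖p_u(x) − φ(p_cs(x))‖`:
    (V : (Ecs → Eu) → Ecs × Eu → ℝ)
    (hV : ∀ φ x, V φ x = ‖x.2 - φ x.1‖) :
    (1 < μ - 2 * ε) ∧
    (∀ φ, F₁ φ → ∀ x : Ecs × Eu, (μ - 2 * ε) * V (Γ φ) x ≤ V φ (g x)) := by

  have hμ2ε : 1 < μ - 2 * ε := by nlinarith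
  refine ⟨hμ2ε, ?_⟩
  intro φ hφ x
  obtain ⟨y, z⟩ := x
  set ψ := Γ φ with hψdef
  obtain ⟨hφ0, hφlip⟩ := (hF₁ φ).1 hφ
  set w : Eu := z - ψ y with hw
  set a := (g (y, z)).1 with ha
  set b := (g (y, z)).2 with hb
  set a' := (g (y, ψ y)).1 with ha'
  set b' := (g (y, ψ y)).2 with hb'
  -- invariance: b' = φ a'
  have hinv : b' = φ a' := by
    have h1 := hΓ φ hφ y
    have h2 := congrArg (fun u => (T ((0 : Ecs), u)).2) h1
    simp only [hS₂] at h2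
    have h3 : (T (y, ψ y)).2 = (T ((0 : Ecs), ψ y)).2 := by
      have hsplit : ((y, ψ y) : Ecs × Eu) = (y, (0 : Eu)) + ((0 : Ecs), ψ y) := by simp
      rw [hsplit, map_add]
      simp [hinv_cs]
    rw [h3] at h2
    simp only [← hψdef] at h2
    have h4 : φ a' = (T ((0 : Ecs), ψ y)).2 + (b' - (T ((0 : Ecs), ψ y)).2) :=
      sub_eq_iff_eq_add.mp h2
    rw [h4]; abel
  -- the Lipschitz perturbation
  set Δ : Ecs × Eu := (g (y, z) - T (y, z)) - (g (y, ψ y) - T (y, ψ y)) with hΔdef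
  have hxx' : ((y, z) : Ecs × Eu) - (y, ψ y) = ((0 : Ecs), w) := by
    simp [hw, Prod.mk_sub_mk]
  have hnormw : ‖(((0 : Ecs), w) : Ecs × Eu)‖ = ‖w‖ := by
    rw [Prod.norm_def]
    simp [max_eq_right (norm_nonneg w)]
  have hΔ : ‖Δ‖ ≤ ε * ‖w‖ := by
    have := hgT (y, z) (y, ψ y)
    rwa [hxx', hnormw] at this
  have hTsub : T (y, z) - T (y, ψ y) = T ((0 : Ecs), w) := by
    rw [← map_sub, hxx']
  have hsum : g (y, z) - g (y, ψ y) = T ((0 : Ecs), w) + Δ := by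
    rw [hΔdef, ← hTsub]; abel
  have hsnd : b - b' = (T ((0 : Ecs), w)).2 + Δ.2 := by
    have := congrArg Prod.snd hsum
    simpa [hb, hb', Prod.snd_sub, Prod.snd_add] using this
  have hfst : a - a' = Δ.1 := by
    have := congrArg Prod.fst hsum
    simpa [ha, ha', Prod.fst_sub, Prod.fst_add, hinv_u] using this
  -- key algebraic identity
  have hkey : b - φ a = (T ((0 : Ecs), w)).2 + (Δ.2 - (φ a - φ a')) := by
    have : b - φ a = (b - b') - (φ a - φ a') := by rw [hinv]; abel
    rw [this, hsnd]; abel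
  -- norm estimates
  have hTw : μ * ‖w‖ ≤ ‖(T ((0 : Ecs), w)).2‖ := by
    have h1 := hTu w
    have h2 : ‖T ((0 : Ecs), w)‖ = ‖(T ((0 : Ecs), w)).2‖ := by
      rw [Prod.norm_def, hinv_u, norm_zero]
      exact max_eq_right (norm_nonneg _)
    linarith [h1, h2.le, h2.ge]
  have hΔ2 : ‖Δ.2‖ ≤ ε * ‖w‖ := le_trans (norm_snd_le Δ) hΔ
  have hφd : ‖φ a - φ a'‖ ≤ ε * ‖w‖ := by
    calc ‖φ a - φ a'‖ ≤ ‖a - a'‖ := hφlip a a'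
      _ = ‖Δ.1‖ := by rw [hfst]
      _ ≤ ‖Δ‖ := norm_fst_le Δ
      _ ≤ ε * ‖w‖ := hΔ
  have hmain : (μ - 2 * ε) * ‖w‖ ≤ ‖b - φ a‖ := by
    have h1 : ‖(T ((0 : Ecs), w)).2‖ - ‖Δ.2 - (φ a - φ a')‖ ≤ ‖b - φ a‖ := by
      have hc : ‖(T ((0 : Ecs), w)).2‖ ≤ ‖b - φ a‖ + ‖Δ.2 - (φ a - φ a')‖ := by
        calc ‖(T ((0 : Ecs), w)).2‖
            = ‖(b - φ a) - (Δ.2 - (φ a - φ a'))‖ := by rw [hkey]; congr 1; abel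
          _ ≤ ‖b - φ a‖ + ‖Δ.2 - (φ a - φ a')‖ := norm_sub_le _ _
      linarith
    have h2 : ‖Δ.2 - (φ a - φ a')‖ ≤ 2 * (ε * ‖w‖) := by
      calc ‖Δ.2 - (φ a - φ a')‖ ≤ ‖Δ.2‖ + ‖φ a - φ a'‖ := norm_sub_le _ _
        _ ≤ 2 * (ε * ‖w‖) := by linarith
    nlinarith [hTw, h1, h2]
  rw [hV, hV]
  simpa [hw] using hmain
end

section
/- Let f : ℝ^d → ℝ be C². Suppose x* is a strict saddle point of f (i.e. ∇f(x*) = 0 and ∇²f(x*) has at least one negative eigenvalue), and the positive step sizes α_k converge to 0 with ∑_k α_k = ∞. Let h₁,…,h_d be the eigenvalues of ∇²f(x*) with orthonormal eigenvectors v₁,…,v_d, and set E_cs = span{v_i : h_i ≥ 0}, E_u = span{v_j : h_j < 0}, T_k = I − α_k∇²f(x*). Then there exist K ≥ 0, c > 0 and radius r > 0 such that for all k ≥ K: ‖T_k y‖ ≤ ‖y‖ for y ∈ E_cs, ‖T_k z‖ ≥ (1 + c·α_k)‖z‖ for z ∈ E_u, and Lip((g_k(·+x*) − x* − T_k)|_{B_r(0)})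 ≤ c·α_k/20, where g_k(x) = x − α_k∇f(x); moreover setting μ_k = 1 + c·α_k, λ_k = 1, ε_k = c·α_k/5, the series ∑_{k≥K} ε_k/(μ_k − 2ε_k) diverges. -/
/-!
In an orthonormal eigenbasis of `A = ∇²f(x*)` the map `T_k = I − α_k A` is diagonal with entries
`1 − α_k h_i`. Once `α_k` is small, these lie in `[-1, 1]` for `h_i ≥ 0` and are at least
`1 + c α_k` for `h_i < 0`, where `c` is any positive lower bound for the `|h_j|` with `h_j < 0`.
The remainder `g_k(· + x*) − x* − T_k` is `−α_k (∇f(· + x*) − A)`, and `∇f(· + x*) − A` is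
`(c/20)`-Lipschitz near `0` because `∇f` is strictly differentiable at `x*`. Finally
`ε_k/(μ_k − 2ε_k) ≥ c α_k / 8` once `c α_k ≤ 1`, so the series diverges together with `∑ α_k`.
-/

open Filter Finset Metric RealInnerProductSpace

theorem Orthonormal.inner_eq_zero_of_mem_span_image {ι 𝕜 E : Type*} [RCLike 𝕜]
    [NormedAddCommGroup E] [InnerProductSpace 𝕜 E] {v : ι → E} (hv : Orthonormal 𝕜 v)
    {s : Set ι} {i : ι} (hi : i ∉ s) {y : E} (hy : y ∈ Submodule.span 𝕜 (v '' s)) :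
    inner 𝕜 (v i) y = 0 := by
  rw [Finsupp.mem_span_image_iff_linearCombination] at hy
  obtain ⟨l, hl, rfl⟩ := hy
  rw [← inner_conj_symm, hv.inner_finsupp_eq_zero hi hl, map_zero]

namespace OrthonormalBasis

variable {ι 𝕜 E : Type*} [Fintype ι] [RCLike 𝕜] [NormedAddCommGroup E] [InnerProductSpace 𝕜 E]

theorem norm_le_norm_of_forall_norm_inner_le (b : OrthonormalBasis ι 𝕜 E) {x y : E}
    (hxy : ∀ i, ‖inner 𝕜 (b i) x‖ ≤ ‖inner 𝕜 (b i) y‖) : ‖x‖ ≤ ‖y‖ := by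
  have hsq : ‖x‖ ^ 2 ≤ ‖y‖ ^ 2 := by
    rw [← b.sum_sq_norm_inner_right, ← b.sum_sq_norm_inner_right]
    gcongr with i
    exact hxy i
  exact (pow_le_pow_iff_left₀ (norm_nonneg x) (norm_nonneg y) two_ne_zero).mp hsq

theorem inner_apply_of_apply_eq_smul (b : OrthonormalBasis ι 𝕜 E) {A : E →ₗ[𝕜] E} {h : ι → 𝕜}
    (hA : ∀ j, A (b j) = h j • b j) (i : ι) (y : E) :
    inner 𝕜 (b i) (A y) = h i * inner 𝕜 (b i) y := by
  classical
  have hfun : (innerₛₗ 𝕜 (b i)).comp A = h i • innerₛₗ 𝕜 (b i) := b.toBasis.ext fun j => by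
    rcases eq_or_ne i j with rfl | hij <;> simp [inner_smul_right, b.inner_eq_ite, *]
  exact LinearMap.congr_fun hfun y

end OrthonormalBasis

section GradientStep

variable {ι E : Type*} [Fintype ι] [NormedAddCommGroup E] [InnerProductSpace ℝ E]
  (b : OrthonormalBasis ι ℝ E) {A : E →ₗ[ℝ] E} {h : ι → ℝ} {a : ℝ}

theorem inner_sub_smul_apply_of_apply_eq_smul (hA : ∀ j, A (b j) = h j • b j) (i : ι) (y : E) :
    ⟪b i, y - a • A y⟫ = (1 - a * h i) * ⟪b i, y⟫ := by
  rw [inner_sub_right, real_inner_smul_right, b.inner_apply_of_apply_eq_smul hA]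
  ring

theorem norm_sub_smul_apply_le_of_mem_span_nonneg (hA : ∀ j, A (b j) = h j • b j)
    (ha : 0 ≤ a) (hah : ∀ i, a * h i ≤ 2) {y : E}
    (hy : y ∈ Submodule.span ℝ (b '' {i | 0 ≤ h i})) :
    ‖y - a • A y‖ ≤ ‖y‖ := by
  refine b.norm_le_norm_of_forall_norm_inner_le fun i => ?_
  rw [inner_sub_smul_apply_of_apply_eq_smul b hA, norm_mul]
  by_cases hi : 0 ≤ h i
  · have : |1 - a * h i| ≤ 1 := abs_le.mpr ⟨by linarith [hah i], by nlinarith⟩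
    exact mul_le_of_le_one_left (norm_nonneg _) this
  · simp [b.orthonormal.inner_eq_zero_of_mem_span_image hi hy]

theorem mul_norm_le_norm_sub_smul_apply_of_mem_span_neg (hA : ∀ j, A (b j) = h j • b j)
    (ha : 0 ≤ a) {c : ℝ} (hc0 : 0 ≤ c) (hc : ∀ i, h i < 0 → c ≤ -h i) {z : E}
    (hz : z ∈ Submodule.span ℝ (b '' {i | h i < 0})) :
    (1 + c * a) * ‖z‖ ≤ ‖z - a • A z‖ := by
  have hca : 0 ≤ 1 + c * a := by positivity
  rw [← abs_of_nonneg hca, ← Real.norm_eq_abs, ← norm_smul]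
  refine b.norm_le_norm_of_forall_norm_inner_le fun i => ?_
  rw [inner_sub_smul_apply_of_apply_eq_smul b hA, real_inner_smul_right, norm_mul, norm_mul]
  by_cases hi : h i < 0
  · have : 1 + c * a ≤ 1 - a * h i := by nlinarith [hc i hi]
    gcongr
    rwa [Real.norm_of_nonneg hca, Real.norm_of_nonneg (hca.trans this)]
  · simp [b.orthonormal.inner_eq_zero_of_mem_span_image hi hz]

end GradientStep

theorem ContDiff.gradient {F : Type*} [NormedAddCommGroup F] [InnerProductSpace ℝ F]
    [CompleteSpace F] {f : F → ℝ} {m n : WithTop ℕ∞} (hf : ContDiff ℝ n f) (hmn : m + 1 ≤ n) :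
    ContDiff ℝ m (gradient f) :=
  (InnerProductSpace.toDual ℝ F).symm.contDiff.comp (hf.fderiv_right hmn)

theorem ApproximatesLinearOn.norm_step_sub_linear_sub_le {E : Type*} [NormedAddCommGroup E]
    [NormedSpace ℝ E] {g : E → E} {A : E →L[ℝ] E} {s : Set E} {ε : NNReal}
    (hg : ApproximatesLinearOn g A s ε) {a : ℝ} (ha : 0 ≤ a) {p x x' : E} (hx : x + p ∈ s)
    (hx' : x' + p ∈ s) :
    ‖((((x + p) - a • g (x + p)) - p) - (x - a • A x))
        - ((((x' + p) - a • g (x' + p)) - p) - (x' - a • A x'))‖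
      ≤ a * ε * ‖x - x'‖ := by
  have hrew : ((((x + p) - a • g (x + p)) - p) - (x - a • A x))
        - ((((x' + p) - a • g (x' + p)) - p) - (x' - a • A x'))
      = -(a • (g (x + p) - g (x' + p) - A ((x + p) - (x' + p)))) := by
    rw [map_sub, map_add, map_add]
    module
  rw [hrew, norm_neg, norm_smul, Real.norm_eq_abs, abs_of_nonneg ha, mul_assoc]
  gcongr
  simpa using hg _ hx _ hx'

theorem exists_pos_le_neg_of_neg {ι : Type*} [Finite ι] (h : ι → ℝ) :
    ∃ c > 0, ∀ i, h i < 0 → c ≤ -h i := by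
  have hsmall : ∀ᶠ c in nhdsWithin (0 : ℝ) (Set.Ioi 0), ∀ i, h i < 0 → c ≤ -h i :=
    eventually_all.mpr fun i => by
      by_cases hi : h i < 0
      · exact (eventually_le_nhds (neg_pos.mpr hi)).filter_mono nhdsWithin_le_nhds
          |>.mono fun _ hc _ => hc
      · exact Eventually.of_forall fun _ hi' => absurd hi' hi
  obtain ⟨c, hc, hc0⟩ := (hsmall.and self_mem_nhdsWithin).exists
  exact ⟨c, hc0, hc⟩

theorem tendsto_sum_range_div_atTop_of_not_summable {u : ℕ → ℝ} (hu0 : ∀ k, 0 ≤ u k)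
    (hu1 : ∀ k, u k ≤ 1) (hu : ¬ Summable u) :
    Tendsto (fun n => ∑ k ∈ range n, (u k / 5) / ((1 + u k) - 2 * (u k / 5))) atTop atTop := by
  have hsum : Tendsto (fun n => (∑ k ∈ range n, u k) / 8) atTop atTop :=
    ((not_summable_iff_tendsto_nat_atTop_of_nonneg hu0).mp hu).atTop_div_const (by norm_num)
  refine tendsto_atTop_mono (fun n => ?_) hsum
  rw [Finset.sum_div]
  refine Finset.sum_le_sum fun k _ => ?_
  rw [le_div_iff₀ (by linarith [hu0 k])]
  nlinarith [hu0 k, hu1 k]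

theorem gd_strict_saddle_is_nph_general {d : ℕ}
    (f : EuclideanSpace ℝ (Fin d) → ℝ) (hf : ContDiff ℝ 2 f)
    (xs : EuclideanSpace ℝ (Fin d))
    (h : Fin d → ℝ) (v : Fin d → EuclideanSpace ℝ (Fin d))
    (hON : Orthonormal ℝ v)
    (heig : ∀ i, fderiv ℝ (gradient f) xs (v i) = h i • v i)
    (α : ℕ → ℝ) (hαpos : ∀ k, 0 < α k)
    (hvanish : Tendsto α atTop (nhds 0))
    (hnonsum : ¬ Summable α) :
    ∃ (K : ℕ) (c r : ℝ), 0 < c ∧ 0 < r ∧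
      (∀ k ≥ K, ∀ y ∈ Submodule.span ℝ (v '' {i | 0 ≤ h i}),
        ‖y - α k • fderiv ℝ (gradient f) xs y‖ ≤ ‖y‖) ∧
      (∀ k ≥ K, ∀ z ∈ Submodule.span ℝ (v '' {i | h i < 0}),
        (1 + c * α k) * ‖z‖ ≤ ‖z - α k • fderiv ℝ (gradient f) xs z‖) ∧
      (∀ k ≥ K, ∀ x ∈ ball (0 : EuclideanSpace ℝ (Fin d)) r,
        ∀ x' ∈ ball (0 : EuclideanSpace ℝ (Fin d)) r,
        ‖((((x + xs) - α k • gradient f (x + xs)) - xs)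
            - (x - α k • fderiv ℝ (gradient f) xs x))
          - ((((x' + xs) - α k • gradient f (x' + xs)) - xs)
            - (x' - α k • fderiv ℝ (gradient f) xs x'))‖
          ≤ (c * α k / 20) * ‖x - x'‖) ∧
      Tendsto (fun n => ∑ k ∈ range n,
          (c * α (K + k) / 5) / ((1 + c * α (K + k)) - 2 * (c * α (K + k) / 5)))
        atTop atTop := by
  obtain ⟨b, rfl⟩ : ∃ b : OrthonormalBasis (Fin d) ℝ (EuclideanSpace ℝ (Fin d)), ⇑b = v :=
    ⟨.mk hON (hON.linearIndependent.span_eq_top_of_card_eq_finrank' (by simp)).ge,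
      OrthonormalBasis.coe_mk _ _⟩
  obtain ⟨c, hc0, hc⟩ := exists_pos_le_neg_of_neg h
  obtain ⟨K, hK⟩ : ∃ K, ∀ k ≥ K, (∀ i, α k * h i ≤ 2) ∧ c * α k ≤ 1 := by
    refine eventually_atTop.mp ((eventually_all.mpr fun i => ?_).and ?_)
    · exact (hvanish.mul_const (h i)).eventually (eventually_le_nhds (by norm_num))
    · exact (hvanish.const_mul c).eventually (eventually_le_nhds (by norm_num))
  obtain ⟨s, hs, hgrad⟩ := ((hf.gradient (m := 1) (by norm_num)).contDiffAt.hasStrictFDerivAt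
    one_ne_zero).approximates_deriv_on_nhds (c := ⟨c / 20, by positivity⟩)
    (.inr (NNReal.coe_pos.mp (by positivity : (0 : ℝ) < c / 20)))
  obtain ⟨r, hr, hrs⟩ := Metric.mem_nhds_iff.mp hs
  have hshift : ∀ x ∈ ball 0 r, x + xs ∈ s := fun x hx => hrs (by
    rwa [mem_ball, dist_eq_norm, add_sub_cancel_right, ← mem_ball_zero_iff])
  refine ⟨K, c, r, hc0, hr, fun k hk y hy => ?_, fun k hk z hz => ?_,
    fun k hk x hx x' hx' => ?_, ?_⟩
  · exact norm_sub_smul_apply_le_of_mem_span_nonneg b heig (hαpos k).le (hK k hk).1 hy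
  · exact mul_norm_le_norm_sub_smul_apply_of_mem_span_neg b heig (hαpos k).le hc0.le hc hz
  · calc _ ≤ α k * (c / 20) * ‖x - x'‖ :=
          hgrad.norm_step_sub_linear_sub_le (hαpos k).le (hshift x hx) (hshift x' hx')
      _ = c * α k / 20 * ‖x - x'‖ := by ring
  · refine tendsto_sum_range_div_atTop_of_not_summable (fun k => (mul_pos hc0 (hαpos _)).le)
      (fun k => (hK (K + k) (Nat.le_add_right K k)).2) ?_
    simp_rw [add_comm K]
    rwa [summable_mul_left_iff hc0.ne', summable_nat_add_iff]

/-- Strict saddles are non-uniformly pseudo-hyperbolic unstable fixed points of gradient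
descent with vanishing, non-summable step sizes. If `x*` is a strict saddle of the `C²`
function `f`, with orthonormal eigenbasis `v_i` of `∇²f(x*)` and eigenvalues `h_i`, then
with `E_cs = span{v_i : h_i ≥ 0}`, `E_u = span{v_j : h_j < 0}` and
`T_k = I − α_k ∇²f(x*)`, there are `K`, `c > 0`, `r > 0` such that for `k ≥ K`:
`‖T_k y‖ ≤ ‖y‖` on `E_cs`, `‖T_k z‖ ≥ (1 + c α_k)‖z‖` on `E_u`, the shifted map
`g_k(·+x*) − x* − T_k` is `(c α_k/20)`-Lipschitz on `B_r(0)`, and with `μ_k = 1 + c α_k`,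
`λ_k = 1`, `ε_k = c α_k / 5` the series `∑_{k≥K} ε_k/(μ_k − 2ε_k)` diverges. -/
theorem gd_strict_saddle_is_nph {d : ℕ}
    (f : EuclideanSpace ℝ (Fin d) → ℝ) (hf : ContDiff ℝ 2 f)
    (xs : EuclideanSpace ℝ (Fin d)) (hcrit : gradient f xs = 0)
    (h : Fin d → ℝ) (v : Fin d → EuclideanSpace ℝ (Fin d))
    (hON : Orthonormal ℝ v)
    (heig : ∀ i, fderiv ℝ (gradient f) xs (v i) = h i • v i)
    (hstrict : ∃ i, h i < 0)
    (α : ℕ → ℝ) (hαpos : ∀ k, 0 < α k)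
    (hvanish : Tendsto α atTop (nhds 0))
    (hnonsum : ¬ Summable α) :
    ∃ (K : ℕ) (c r : ℝ), 0 < c ∧ 0 < r ∧
      (∀ k ≥ K, ∀ y ∈ Submodule.span ℝ (v '' {i | 0 ≤ h i}),
        ‖y - α k • fderiv ℝ (gradient f) xs y‖ ≤ ‖y‖) ∧
      (∀ k ≥ K, ∀ z ∈ Submodule.span ℝ (v '' {i | h i < 0}),
        (1 + c * α k) * ‖z‖ ≤ ‖z - α k • fderiv ℝ (gradient f) xs z‖) ∧
      (∀ k ≥ K, ∀ x ∈ ball (0 : EuclideanSpace ℝ (Fin d)) r,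
        ∀ x' ∈ ball (0 : EuclideanSpace ℝ (Fin d)) r,
        ‖((((x + xs) - α k • gradient f (x + xs)) - xs)
            - (x - α k • fderiv ℝ (gradient f) xs x))
          - ((((x' + xs) - α k • gradient f (x' + xs)) - xs)
            - (x' - α k • fderiv ℝ (gradient f) xs x'))‖
          ≤ (c * α k / 20) * ‖x - x'‖) ∧
      Tendsto (fun n => ∑ k ∈ range n,
          (c * α (K + k) / 5) / ((1 + c * α (K + k)) - 2 * (c * α (K + k) / 5)))
        atTop atTop :=
  gd_strict_saddle_is_nph_general f hf xs h v hON heig α hαpos hvanish hnonsum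
end
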